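/- Anytime-valid coverage of the prior-posterior-ratio confidence sets: defining C_t = {θ : ℓ_t(θ) ≤ 1/δ} for δ ∈ (0,1], the true parameter θ* is contained in C_t simultaneously for all t ≥ 1 with probability at least 1 − δ, where probability is over the prior draw of θ* and the observations. -/

import Mathlib

/-!
Ville's inequality: stop `ℓ` the first time it reaches `1/δ` before a horizon `n`. By optional
stopping the stopped value has expectation at most `E ℓ₀ = 1`, so by Markov's inequality the
level `1/δ` is reached before `n` with probability at most `δ`; let `n → ∞`.
-/

open MeasureTheory Filter Topology

namespace MeasureTheory

variable {Ω : Type*} {m : MeasurableSpace Ω} {μ : Measure Ω} {ℱ : Filtration ℕ m}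
  {f : ℕ → Ω → ℝ}

theorem Supermartingale.integral_stoppedValue_le_integral_zero [SigmaFiniteFiltration μ ℱ]
    (hf : Supermartingale f ℱ μ) {τ : Ω → ℕ∞} (hτ : IsStoppingTime ℱ τ) {N : ℕ}
    (hbdd : ∀ ω, τ ω ≤ N) : ∫ ω, stoppedValue f τ ω ∂μ ≤ ∫ ω, f 0 ω ∂μ := by
  have h := hf.neg.expected_stoppedValue_mono (isStoppingTime_const ℱ 0) hτ
    (fun _ => bot_le) hbdd
  simpa [stoppedValue, integral_neg] using h

theorem Supermartingale.mul_measureReal_exists_le_le_integral_zero [IsFiniteMeasure μ]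
    (hf : Supermartingale f ℱ μ) (hnonneg : 0 ≤ f) (c : ℝ) (n : ℕ) :
    c * μ.real {ω | ∃ k ≤ n, c ≤ f k ω} ≤ ∫ ω, f 0 ω ∂μ := by
  set τ : Ω → ℕ∞ := fun ω => (hittingBtwn f (Set.Ici c) 0 n ω : ℕ)
  have hτ : IsStoppingTime ℱ τ :=
    hf.stronglyAdapted.adapted.isStoppingTime_hittingBtwn measurableSet_Ici
  have hτ_le : ∀ ω, τ ω ≤ n := fun ω => by simpa [τ] using hittingBtwn_le (m := n) ω
  have hB : MeasurableSet {ω | ∃ k ≤ n, c ≤ f k ω} := by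
    have hfm : ∀ k, Measurable (f k) := fun k =>
      (hf.stronglyMeasurable k).measurable.mono (ℱ.le k) le_rfl
    measurability
  have hc_le : ∀ ω ∈ {ω | ∃ k ≤ n, c ≤ f k ω}, c ≤ stoppedValue f τ ω := by
    rintro ω ⟨k, hkn, hk⟩
    exact stoppedValue_hittingBtwn_mem ⟨k, ⟨Nat.zero_le k, hkn⟩, hk⟩
  have hint : Integrable (stoppedValue f τ) μ :=
    integrable_stoppedValue ℕ hτ hf.integrable hτ_le
  calc c * μ.real {ω | ∃ k ≤ n, c ≤ f k ω}
      ≤ ∫ ω in {ω | ∃ k ≤ n, c ≤ f k ω}, stoppedValue f τ ω ∂μ := by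
        simpa [mul_comm] using
          setIntegral_ge_of_const_le_real hB (measure_ne_top _ _) hc_le hint.integrableOn
    _ ≤ ∫ ω, stoppedValue f τ ω ∂μ :=
        setIntegral_le_integral hint (.of_forall fun ω => hnonneg _ _)
    _ ≤ ∫ ω, f 0 ω ∂μ := hf.integral_stoppedValue_le_integral_zero hτ hτ_le

theorem Supermartingale.ville_ineq [IsFiniteMeasure μ]
    (hf : Supermartingale f ℱ μ) (hnonneg : 0 ≤ f) (c : ℝ) :
    c * μ.real {ω | ∃ k, c ≤ f k ω} ≤ ∫ ω, f 0 ω ∂μ := by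
  have hunion : {ω | ∃ k, c ≤ f k ω} = ⋃ n, {ω | ∃ k ≤ n, c ≤ f k ω} := by
    ext ω
    simp only [Set.mem_ofPred_eq, Set.mem_iUnion]
    exact ⟨fun ⟨k, hk⟩ => ⟨k, k, le_rfl, hk⟩, fun ⟨_, k, _, hk⟩ => ⟨k, hk⟩⟩
  have hmono : Monotone fun n => {ω | ∃ k ≤ n, c ≤ f k ω} :=
    fun _ _ hab _ ⟨k, hka, hk⟩ => ⟨k, hka.trans hab, hk⟩
  have hlim : Tendsto (fun n => c * μ.real {ω | ∃ k ≤ n, c ≤ f k ω}) atTop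
      (𝓝 (c * μ.real {ω | ∃ k, c ≤ f k ω})) := by
    rw [hunion]
    exact ((ENNReal.tendsto_toReal (measure_ne_top _ _)).comp
      (tendsto_measure_iUnion_atTop hmono)).const_mul c
  exact le_of_tendsto' hlim fun n => hf.mul_measureReal_exists_le_le_integral_zero hnonneg c n

end MeasureTheory

theorem anytime_valid_coverage_general {Ω : Type*} {m : MeasurableSpace Ω}
    {μ : Measure Ω} [IsProbabilityMeasure μ] {ℱ : Filtration ℕ m}
    (ℓ : ℕ → Ω → ℝ) (hsm : Supermartingale ℓ ℱ μ)
    (hnonneg : ∀ t ω, 0 ≤ ℓ t ω)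
    (h0 : ∀ ω, ℓ 0 ω = 1)
    {δ : ℝ} (hδ : 0 < δ) :
    1 - δ ≤ (μ {ω | ∀ t, 1 ≤ t → ℓ t ω ≤ 1 / δ}).toReal := by
  set C := {ω | ∀ t, 1 ≤ t → ℓ t ω ≤ 1 / δ}
  have hC_compl : Cᶜ ⊆ {ω | ∃ t, 1 / δ ≤ ℓ t ω} := by
    intro ω hω
    obtain ⟨t, -, ht⟩ : ∃ t, 1 ≤ t ∧ 1 / δ < ℓ t ω := by simpa [C] using hω
    exact ⟨t, ht.le⟩
  have hville : 1 / δ * μ.real {ω | ∃ t, 1 / δ ≤ ℓ t ω} ≤ 1 := by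
    simpa [h0] using hsm.ville_ineq hnonneg (1 / δ)
  have hC_compl_le : μ.real Cᶜ ≤ δ :=
    (measureReal_mono hC_compl).trans
      (by rwa [div_mul_eq_mul_div, one_mul, div_le_one hδ] at hville)
  have hcover : 1 ≤ μ.real C + μ.real Cᶜ := by
    simpa using measureReal_union_le (μ := μ) C Cᶜ
  rw [← measureReal_def]
  linarith

/-- Anytime-valid coverage: let `ℓ t ω` be the prior-posterior ratio at the true
parameter after `t` observations, a nonnegative supermartingale with ℓ_0 = 1.
Then θ* belongs to the confidence set C_t = {θ : ℓ_t(θ) ≤ 1/δ} simultaneously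
for all t ≥ 1 with probability at least 1 − δ. -/
theorem anytime_valid_coverage {Ω : Type*} {m : MeasurableSpace Ω}
    {μ : Measure Ω} [IsProbabilityMeasure μ] {ℱ : Filtration ℕ m}
    (ℓ : ℕ → Ω → ℝ) (hsm : Supermartingale ℓ ℱ μ)
    (hnonneg : ∀ t ω, 0 ≤ ℓ t ω)
    (h0 : ∀ ω, ℓ 0 ω = 1)
    {δ : ℝ} (hδ : 0 < δ) (hδ1 : δ ≤ 1) :
    1 - δ ≤ (μ {ω | ∀ t, 1 ≤ t → ℓ t ω ≤ 1 / δ}).toReal :=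
  anytime_valid_coverage_general ℓ hsm hnonneg h0 hδ
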